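/- arXiv:math/0404553 — 7 statements merged into one kernel-verified Lean document; each statement's English description precedes it below -/
import Mathlib

section
/- Every completely positive map E on the space of N×N complex matrices admits an operator-sum representation: there exist at most N² operators E_k such that E(ρ) = Σ_k E_k ρ E_k† for all ρ. -/
open Matrix ComplexOrder

/-- The ampliation `1_k ⊗ E` acting on block matrices `M_k(M_N(ℂ))`. -/
def ampliation (k N : ℕ)
    (E : Matrix (Fin N) (Fin N) ℂ →ₗ[ℂ] Matrix (Fin N) (Fin N) ℂ)
    (M : Matrix (Fin k × Fin N) (Fin k × Fin N) ℂ) :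
    Matrix (Fin k × Fin N) (Fin k × Fin N) ℂ :=
  fun p q => E (Matrix.of fun a b => M (p.1, a) (q.1, b)) p.2 q.2

/-- A linear map on `M_N(ℂ)` is completely positive if all its ampliations are positive. -/
def IsCompletelyPositive (N : ℕ)
    (E : Matrix (Fin N) (Fin N) ℂ →ₗ[ℂ] Matrix (Fin N) (Fin N) ℂ) : Prop :=
  ∀ k : ℕ, ∀ M : Matrix (Fin k × Fin N) (Fin k × Fin N) ℂ,
    M.PosSemidef → (ampliation k N E M).PosSemidef

/-!
Choi's argument. Applying `1_N ⊗ E` to the rank-one projection onto the unnormalised maximally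
entangled vector `Ω = ∑ᵢ eᵢ ⊗ eᵢ` (which is `vec 1`) yields the Choi matrix `[E(Eᵢⱼ)]ᵢⱼ`, so
complete positivity makes the Choi matrix positive semidefinite. Factor it as `B†B` with `B` of
size `N² × N²`. Since `E(ρ) = ∑ᵢⱼ ρᵢⱼ E(Eᵢⱼ)`, reshaping each of the `N²` rows of `B` into an
`N × N` matrix gives a Kraus operator.
-/

theorem Matrix.PosSemidef.exists_eq_conjTranspose_mul_self {n 𝕜 : Type*} [Fintype n] [RCLike 𝕜]
    {A : Matrix n n 𝕜} (hA : A.PosSemidef) : ∃ B : Matrix n n 𝕜, A = Bᴴ * B := by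
  classical
  open scoped MatrixOrder in
  exact CStarAlgebra.nonneg_iff_eq_star_mul_self.mp hA.nonneg

def Matrix.krausOperator {m n R : Type*} [Star R] (B : Matrix m (n × n) R) (r : m) :
    Matrix n n R :=
  of fun a i => star (B r (i, a))

namespace LinearMap

variable {n m R : Type*} [DecidableEq n]

def choiMatrix [Semiring R] (E : Matrix n n R →ₗ[R] Matrix n n R) : Matrix (n × n) (n × n) R :=
  of fun p q => E (Matrix.single p.1 q.1 1) p.2 q.2

theorem apply_eq_sum_choiMatrix [Fintype n] [Semiring R] (E : Matrix n n R →ₗ[R] Matrix n n R)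
    (ρ : Matrix n n R) (a b : n) :
    E ρ a b = ∑ i, ∑ j, ρ i j * E.choiMatrix (i, a) (j, b) := by
  conv_lhs => rw [matrix_eq_sum_single ρ]
  have single_eq_smul (i j : n) :
      Matrix.single i j (ρ i j) = ρ i j • Matrix.single i j (1 : R) := by
    rw [smul_single, smul_eq_mul, mul_one]
  simp only [single_eq_smul, map_sum, map_smul, Matrix.sum_apply, Matrix.smul_apply, smul_eq_mul,
    choiMatrix, of_apply]

theorem apply_eq_sum_krausOperator [Fintype n] [Fintype m] [CommRing R] [StarRing R]
    {E : Matrix n n R →ₗ[R] Matrix n n R} {B : Matrix m (n × n) R}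
    (hB : E.choiMatrix = Bᴴ * B) (ρ : Matrix n n R) :
    E ρ = ∑ r, krausOperator B r * ρ * (krausOperator B r)ᴴ := by
  ext a b
  rw [apply_eq_sum_choiMatrix, hB, Matrix.sum_apply]
  simp only [krausOperator, mul_apply, conjTranspose_apply, of_apply, star_star, Finset.sum_mul,
    Finset.mul_sum]
  rw [Finset.sum_comm]
  conv_rhs => rw [Finset.sum_comm]
  refine Finset.sum_congr rfl fun j _ => ?_
  rw [Finset.sum_comm]
  refine Finset.sum_congr rfl fun r _ => Finset.sum_congr rfl fun i _ => ?_
  ring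

end LinearMap

theorem ampliation_vecMulVec_vec_one (N : ℕ)
    (E : Matrix (Fin N) (Fin N) ℂ →ₗ[ℂ] Matrix (Fin N) (Fin N) ℂ) :
    ampliation N N E (vecMulVec (vec 1) (star (vec 1))) = E.choiMatrix := by
  ext ⟨i, a⟩ ⟨j, b⟩
  have block_eq_single :
      (of fun a' b' => vecMulVec (vec 1) (star (vec 1)) (i, a') (j, b') :
        Matrix (Fin N) (Fin N) ℂ) = single i j 1 := by
    ext a' b'
    simp [vecMulVec, vec, one_apply, single_apply, eq_comm, ← ite_and, and_comm]
  simp only [ampliation, block_eq_single, LinearMap.choiMatrix, of_apply]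

theorem IsCompletelyPositive.choiMatrix_posSemidef {N : ℕ}
    {E : Matrix (Fin N) (Fin N) ℂ →ₗ[ℂ] Matrix (Fin N) (Fin N) ℂ}
    (hE : IsCompletelyPositive N E) : E.choiMatrix.PosSemidef :=
  ampliation_vecMulVec_vec_one N E ▸ hE N _ (posSemidef_vecMulVec_self_star _)

/-- Every completely positive map on `M_N(ℂ)` admits an operator-sum (Kraus)
representation with at most `N²` operators. -/
theorem operator_sum_representation (N : ℕ)
    (E : Matrix (Fin N) (Fin N) ℂ →ₗ[ℂ] Matrix (Fin N) (Fin N) ℂ)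
    (hE : IsCompletelyPositive N E) :
    ∃ K : Fin (N ^ 2) → Matrix (Fin N) (Fin N) ℂ,
      ∀ ρ : Matrix (Fin N) (Fin N) ℂ,
        E ρ = ∑ k, K k * ρ * (K k)ᴴ := by
  obtain ⟨B, hB⟩ := hE.choiMatrix_posSemidef.exists_eq_conjTranspose_mul_self
  let e : Fin N × Fin N ≃ Fin (N ^ 2) := finProdFinEquiv.trans (finCongr (sq N).symm)
  refine ⟨fun k => krausOperator B (e.symm k), fun ρ => ?_⟩
  rw [LinearMap.apply_eq_sum_krausOperator hB ρ]
  exact (e.symm.sum_comp fun r => krausOperator B r * ρ * (krausOperator B r)ᴴ).symm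
end

section
/- If the Choi matrix (E(e_ij))_{i,j} of a linear map E on M_N(ℂ) is positive semidefinite, then E is completely positive. -/
open Matrix ComplexOrder

/-- The Choi matrix of `E`: the `N²×N²` block matrix whose `(i,j)` block is `E(e_ij)`. -/
def choiMatrix (N : ℕ)
    (E : Matrix (Fin N) (Fin N) ℂ →ₗ[ℂ] Matrix (Fin N) (Fin N) ℂ) :
    Matrix (Fin N × Fin N) (Fin N × Fin N) ℂ :=
  fun p q => E (Matrix.single p.1 q.1 1) p.2 q.2

lemma sum4_comm {α β γ δ : Type*} [Fintype α] [Fintype β] [Fintype γ] [Fintype δ]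
    (f : α → β → γ → δ → ℂ) :
    ∑ a, ∑ b, ∑ c, ∑ d, f a b c d = ∑ c, ∑ d, ∑ a, ∑ b, f a b c d :=
  calc ∑ a, ∑ b, ∑ c, ∑ d, f a b c d
      = ∑ p : α × β, ∑ q : γ × δ, f p.1 p.2 q.1 q.2 := by
        simp_rw [Fintype.sum_prod_type]
    _ = ∑ q : γ × δ, ∑ p : α × β, f p.1 p.2 q.1 q.2 := Finset.sum_comm
    _ = ∑ c, ∑ d, ∑ a, ∑ b, f a b c d := by simp_rw [Fintype.sum_prod_type]

lemma sum4_comm' {α β γ δ : Type*} [Fintype α] [Fintype β] [Fintype γ] [Fintype δ]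
    (f : α → β → γ → δ → ℂ) :
    ∑ a, ∑ b, ∑ c, ∑ d, f a b c d = ∑ d, ∑ c, ∑ a, ∑ b, f a b c d :=
  calc ∑ a, ∑ b, ∑ c, ∑ d, f a b c d
      = ∑ c, ∑ d, ∑ a, ∑ b, f a b c d := sum4_comm f
    _ = ∑ d, ∑ c, ∑ a, ∑ b, f a b c d := Finset.sum_comm

lemma ampliation_apply_eq (N k : ℕ)
    (E : Matrix (Fin N) (Fin N) ℂ →ₗ[ℂ] Matrix (Fin N) (Fin N) ℂ)
    (M : Matrix (Fin k × Fin N) (Fin k × Fin N) ℂ) (p q : Fin k × Fin N) :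
    ampliation k N E M p q
      = ∑ a, ∑ b, M (p.1, a) (q.1, b) * choiMatrix N E (a, p.2) (b, q.2) := by
  have h : (Matrix.of fun a b => M (p.1, a) (q.1, b))
      = ∑ a, ∑ b, M (p.1, a) (q.1, b) • Matrix.single a b (1 : ℂ) := by
    conv_lhs => rw [Matrix.matrix_eq_sum_single
      (Matrix.of fun a b => M (p.1, a) (q.1, b))]
    simp [Matrix.smul_single, smul_eq_mul]
  simp only [ampliation, h, map_sum, _root_.map_smul, Matrix.sum_apply, Matrix.smul_apply,
    smul_eq_mul, choiMatrix]

lemma posSemidef_exists_eq_conjTranspose_mul_self {n : Type*} [Fintype n] [DecidableEq n]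
    {X : Matrix n n ℂ} (hX : X.PosSemidef) : ∃ B : Matrix n n ℂ, X = Bᴴ * B := by
  open scoped MatrixOrder in
  obtain ⟨B, hB⟩ := CStarAlgebra.nonneg_iff_eq_star_mul_self.mp hX.nonneg
  exact ⟨B, by rw [hB, star_eq_conjTranspose]⟩

/-- If the Choi matrix of a linear map is positive semidefinite, then the map is
completely positive. -/
theorem completelyPositive_of_choiMatrix_posSemidef (N : ℕ)
    (E : Matrix (Fin N) (Fin N) ℂ →ₗ[ℂ] Matrix (Fin N) (Fin N) ℂ)
    (hE : (choiMatrix N E).PosSemidef) :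
    IsCompletelyPositive N E := by
  intro k M hM
  obtain ⟨A, hA⟩ := posSemidef_exists_eq_conjTranspose_mul_self hE
  obtain ⟨B, hB⟩ := posSemidef_exists_eq_conjTranspose_mul_self hM
  set D : Matrix ((Fin k × Fin N) × (Fin N × Fin N)) (Fin k × Fin N) ℂ :=
    fun st q => ∑ b, B st.1 (q.1, b) * A st.2 (b, q.2) with hD
  have key : ampliation k N E M = Dᴴ * D := by
    ext p q
    rw [ampliation_apply_eq]
    simp only [Matrix.mul_apply, Matrix.conjTranspose_apply]
    simp only [hA, hB, hD, Matrix.mul_apply, Matrix.conjTranspose_apply, star_sum, star_mul',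
      Finset.sum_mul, Finset.mul_sum]
    rw [Fintype.sum_prod_type]
    rw [sum4_comm' (fun a b t s => (star (B s (p.1, a)) * B s (q.1, b)) *
      (star (A t (a, p.2)) * A t (b, q.2)))]
    refine Finset.sum_congr rfl fun s _ => Finset.sum_congr rfl fun t _ => ?_
    rw [Finset.sum_comm]
    refine Finset.sum_congr rfl fun a _ => Finset.sum_congr rfl fun b _ => ?_
    ring
  rw [key]
  exact Matrix.posSemidef_conjTranspose_mul_self D
end

section
/- Let C be a subspace of a finite-dimensional Hilbert space H with orthogonal projection P_C, and let E be an operator on H. If for every pair of orthogonal vectors ψ₁, ψ₂ ∈ C the vectors Eψ₁ and ψ₂ are orthogonal, then there exists a scalar λ such that ⟨ψ₁, Eψ₂⟩ = λ⟨ψ₁, ψ₂⟩ for all ψ₁, ψ₂ ∈ C. -/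
open InnerProductSpace

/-!
Compressing `E` to `C` gives an operator `T` on `C` with `⟪y, T x⟫ = ⟪y, E x⟫` for `x, y ∈ C`.
The hypothesis says that `T x` is orthogonal to everything orthogonal to `x`, so `T x` lies in
`(ℂ ∙ x)ᗮᗮ = ℂ ∙ x`; an endomorphism sending every vector into its own span is a scalar.
-/

section

variable {𝕜 F : Type*} [RCLike 𝕜] [NormedAddCommGroup F] [InnerProductSpace 𝕜 F]

theorem Submodule.mem_span_singleton_of_forall_inner_eq_zero {x v : F}
    (h : ∀ y, ⟪x, y⟫_𝕜 = 0 → ⟪y, v⟫_𝕜 = 0) : v ∈ 𝕜 ∙ x := by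
  rw [← Submodule.orthogonal_orthogonal (𝕜 ∙ x), Submodule.mem_orthogonal]
  exact fun y hy => h y (Submodule.mem_orthogonal_singleton_iff_inner_right.mp hy)

theorem LinearMap.exists_eq_smul_id_of_forall_inner_eq_zero {T : F →ₗ[𝕜] F}
    (h : ∀ x y, ⟪x, y⟫_𝕜 = 0 → ⟪y, T x⟫_𝕜 = 0) : ∃ c : 𝕜, T = c • 1 := by
  refine LinearMap.exists_eq_smul_id_of_forall_notLinearIndependent fun x hind => ?_
  obtain ⟨c, hc⟩ := Submodule.mem_span_singleton.mp
    (Submodule.mem_span_singleton_of_forall_inner_eq_zero (h x))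
  exact one_ne_zero (hind.eq_zero_of_pair' (s := c) (t := 1) (by rw [hc, one_smul])).2

end

theorem detectable_of_orthogonality_preserving_general
    {H : Type*} [NormedAddCommGroup H] [InnerProductSpace ℂ H]
    [FiniteDimensional ℂ H] (C : Submodule ℂ H)
    (E : H →ₗ[ℂ] H)
    (h : ∀ ψ₁ ∈ C, ∀ ψ₂ ∈ C, ⟪ψ₁, ψ₂⟫_ℂ = 0 → ⟪ψ₂, E ψ₁⟫_ℂ = 0) :
    ∃ lam : ℂ, ∀ ψ₁ ∈ C, ∀ ψ₂ ∈ C, ⟪ψ₁, E ψ₂⟫_ℂ = lam * ⟪ψ₁, ψ₂⟫_ℂ := by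
  let T : C →ₗ[ℂ] C := C.orthogonalProjectionOnto.toLinearMap ∘ₗ E ∘ₗ C.subtype
  have hT (x y : C) : ⟪y, T x⟫_ℂ = ⟪(y : H), E x⟫_ℂ :=
    C.inner_orthogonalProjectionOnto_eq_of_mem_left y (E x)
  obtain ⟨lam, hlam⟩ := T.exists_eq_smul_id_of_forall_inner_eq_zero fun x y hxy => by
    rw [hT]; exact h x x.2 y y.2 hxy
  refine ⟨lam, fun ψ₁ h₁ ψ₂ h₂ => ?_⟩
  rw [← hT ⟨ψ₂, h₂⟩ ⟨ψ₁, h₁⟩, hlam]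
  simp [inner_smul_right]

/-- If `E` maps orthogonal pairs within the code `C` to orthogonal pairs, then `E`
acts as a scalar on `C` in the quadratic-form sense. -/
theorem detectable_of_orthogonality_preserving
    {H : Type*} [NormedAddCommGroup H] [InnerProductSpace ℂ H]
    [FiniteDimensional ℂ H] (C : Submodule ℂ H) (hC : 1 ≤ Module.finrank ℂ C)
    (E : H →ₗ[ℂ] H)
    (h : ∀ ψ₁ ∈ C, ∀ ψ₂ ∈ C, ⟪ψ₁, ψ₂⟫_ℂ = 0 → ⟪ψ₂, E ψ₁⟫_ℂ = 0) :
    ∃ lam : ℂ, ∀ ψ₁ ∈ C, ∀ ψ₂ ∈ C, ⟪ψ₁, E ψ₂⟫_ℂ = lam * ⟪ψ₁, ψ₂⟫_ℂ :=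
  detectable_of_orthogonality_preserving_general C E h
end

section
/- If a quantum channel E with Kraus operators {E_i} admits a recovery channel R with R∘E(ρ) = ρ for all ρ supported on the code subspace C (ρ = P_C ρ P_C), then there exist scalars λ_ij such that P_C E_i† E_j P_C = λ_ij P_C for all i, j. -/
/-!
Composing the channels, the operators `Kₗᵢ = Rₗ Eᵢ P` are Kraus operators of the map
`X ↦ P X P`: correctability on the code is applied to `P X P`. Comparing entries of both
sides at matrix units, `∑ vec(Kₗᵢ) vec(Kₗᵢ)* = vec(P) vec(P)*`, and a sum of positive
rank-one terms equal to a rank-one term forces `Kₗᵢ = cₗᵢ P`. Inserting `∑ₗ Rₗ† Rₗ = 1`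
then gives
`P Eᵢ† Eⱼ P = ∑ₗ Kₗᵢ† Kₗⱼ = (∑ₗ c̄ₗᵢ cₗⱼ) P`.
-/

open Matrix Finset

section Positivity

variable {𝕜 : Type*} [RCLike 𝕜]

theorem eq_zero_of_sum_mul_star_self_eq_zero {κ : Type*} [Fintype κ] {x : κ → 𝕜}
    (h : ∑ k, x k * star (x k) = 0) (k : κ) : x k = 0 := by
  have hnorm : ∑ k, ‖x k‖ ^ 2 = 0 := by
    simpa only [RCLike.star_def, RCLike.mul_conj, ← RCLike.ofReal_pow, ← RCLike.ofReal_sum,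
      RCLike.ofReal_eq_zero] using h
  simpa using (sum_eq_zero_iff_of_nonneg fun k _ => sq_nonneg ‖x k‖).mp hnorm k (mem_univ k)

theorem exists_eq_smul_of_sum_mul_star_eq {κ α : Type*} [Fintype κ] {v : κ → α → 𝕜}
    {w : α → 𝕜} (h : ∀ a b, ∑ k, v k a * star (v k b) = w a * star (w b)) (k : κ) :
    ∃ c : 𝕜, v k = c • w := by
  by_cases hw : w = 0
  · refine ⟨0, funext fun a => ?_⟩
    have hva : ∑ k, v k a * star (v k a) = 0 := by rw [h a a, hw]; simp
    simpa using eq_zero_of_sum_mul_star_self_eq_zero hva k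
  obtain ⟨a, ha⟩ : ∃ a, w a ≠ 0 := Function.ne_iff.mp hw
  refine ⟨v k a / w a, funext fun b => ?_⟩
  have hcross : ∑ k, (v k b * w a - v k a * w b) * star (v k b * w a - v k a * w b) = 0 := by
    have hexpand : ∀ k, (v k b * w a - v k a * w b) * star (v k b * w a - v k a * w b)
        = v k b * star (v k b) * (w a * star (w a))
          - v k b * star (v k a) * (w a * star (w b))
          - v k a * star (v k b) * (w b * star (w a))
          + v k a * star (v k a) * (w b * star (w b)) :=
      fun k => by simp only [star_sub, star_mul']; ring
    simp only [hexpand, sum_add_distrib, sum_sub_distrib, ← sum_mul, h]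
    ring
  have := eq_zero_of_sum_mul_star_self_eq_zero hcross k
  simp only [Pi.smul_apply, smul_eq_mul]
  field_simp
  linear_combination this

end Positivity

section Kraus

variable {n ι κ α : Type*} [Fintype n] [Fintype ι] [Fintype κ]
  [CommSemiring α] [StarRing α]

def krausMap (K : ι → Matrix n n α) (ρ : Matrix n n α) : Matrix n n α :=
  ∑ i, K i * ρ * (K i)ᴴ

theorem krausMap_krausMap (F : κ → Matrix n n α) (K : ι → Matrix n n α) (ρ : Matrix n n α) :
    krausMap F (krausMap K ρ) = krausMap (fun p : κ × ι => F p.1 * K p.2) ρ := by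
  simp only [krausMap, Fintype.sum_prod_type, mul_sum, sum_mul, conjTranspose_mul, mul_assoc]

theorem krausMap_mul_right (K : ι → Matrix n n α) (Q ρ : Matrix n n α) :
    krausMap (fun i => K i * Q) ρ = krausMap K (Q * ρ * Qᴴ) := by
  simp only [krausMap, conjTranspose_mul, mul_assoc]

theorem sum_apply_mul_star_apply_of_krausMap_eq [DecidableEq n] {K : ι → Matrix n n α}
    {Q : Matrix n n α} (h : ∀ X, krausMap K X = Q * X * Qᴴ) (a b c d : n) :
    ∑ i, K i a b * star (K i c d) = Q a b * star (Q c d) := by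
  simpa [krausMap, Matrix.sum_apply, mul_apply, single_apply, ite_and] using
    congrFun (congrFun (h (single b d 1)) a) c

theorem exists_eq_smul_of_krausMap_eq {𝕜 : Type*} [RCLike 𝕜] {K : ι → Matrix n n 𝕜}
    {Q : Matrix n n 𝕜} (h : ∀ X, krausMap K X = Q * X * Qᴴ) (i : ι) :
    ∃ c : 𝕜, K i = c • Q := by
  classical
  obtain ⟨c, hc⟩ := exists_eq_smul_of_sum_mul_star_eq (v := fun i (p : n × n) => K i p.1 p.2)
    (w := fun p => Q p.1 p.2) (fun p q => sum_apply_mul_star_apply_of_krausMap_eq h _ _ _ _) i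
  exact ⟨c, Matrix.ext fun a b => congrFun hc (a, b)⟩

end Kraus

theorem knill_laflamme_of_correctable_general (N r s : ℕ)
    (P : Matrix (Fin N) (Fin N) ℂ) (hP₁ : Pᴴ = P) (hP₂ : P * P = P)
    (E : Fin r → Matrix (Fin N) (Fin N) ℂ)
    (R : Fin s → Matrix (Fin N) (Fin N) ℂ)
    (hR : ∑ j, (R j)ᴴ * R j = 1)
    (hcorr : ∀ ρ : Matrix (Fin N) (Fin N) ℂ, ρ = P * ρ * P →
      ∑ j, R j * (∑ i, E i * ρ * (E i)ᴴ) * (R j)ᴴ = ρ) :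
    ∃ lam : Fin r → Fin r → ℂ, ∀ i j, P * (E i)ᴴ * E j * P = lam i j • P := by
  set K : Fin s × Fin r → Matrix (Fin N) (Fin N) ℂ := fun p => R p.1 * E p.2 * P
  have hK : ∀ X, krausMap K X = P * X * Pᴴ := fun X => by
    rw [krausMap_mul_right, ← krausMap_krausMap, hP₁]
    exact hcorr _ (by simp only [← mul_assoc, hP₂]; simp only [mul_assoc, hP₂])
  choose c hc using exists_eq_smul_of_krausMap_eq hK
  refine ⟨fun i j => ∑ l, star (c (l, i)) * c (l, j), fun i j => ?_⟩
  calc P * (E i)ᴴ * E j * P = P * (E i)ᴴ * (∑ l, (R l)ᴴ * R l) * E j * P := by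
        rw [hR, mul_one]
    _ = ∑ l, (K (l, i))ᴴ * K (l, j) := by
        simp only [K, mul_sum, sum_mul, conjTranspose_mul, hP₁, mul_assoc]
    _ = ∑ l, (star (c (l, i)) * c (l, j)) • P := by
        simp only [hc, conjTranspose_smul, hP₁, smul_mul_smul, hP₂]
    _ = _ := (sum_smul ..).symm

/-- If a channel with Kraus operators `E_i` is corrected on the code with projection
`P` by a recovery channel with Kraus operators `R_j`, then the Knill–Laflamme
conditions `P E_i† E_j P = λ_ij P` hold. -/
theorem knill_laflamme_of_correctable (N r s : ℕ)
    (P : Matrix (Fin N) (Fin N) ℂ) (hP₁ : Pᴴ = P) (hP₂ : P * P = P)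
    (E : Fin r → Matrix (Fin N) (Fin N) ℂ)
    (hE : ∑ i, (E i)ᴴ * E i = 1)
    (R : Fin s → Matrix (Fin N) (Fin N) ℂ)
    (hR : ∑ j, (R j)ᴴ * R j = 1)
    (hcorr : ∀ ρ : Matrix (Fin N) (Fin N) ℂ, ρ = P * ρ * P →
      ∑ j, R j * (∑ i, E i * ρ * (E i)ᴴ) * (R j)ᴴ = ρ) :
    ∃ lam : Fin r → Fin r → ℂ, ∀ i j, P * (E i)ᴴ * E j * P = lam i j • P :=
  knill_laflamme_of_correctable_general N r s P hP₁ hP₂ E R hR hcorr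
end

section
/- If {E_i} are Kraus operators of a quantum channel E and there is a positive scalar matrix Λ = (λ_ij) with P_C E_i† E_j P_C = λ_ij P_C for all i, j, then there exists a quantum channel R such that R∘E(ρ) = ρ for all ρ with ρ = P_C ρ P_C. -/
/-!
Diagonalise the Knill–Laflamme matrix, `Uᴴ Λ U = diag (s_k²)`, and mix the Kraus operators
by the unitary `U`: `F_k = ∑ᵢ U_ik E_i` is another Kraus family of the same channel, now with
`P F_kᴴ F_l P = δ_kl s_k² P`. So the `W_k = s_k⁻¹ F_k P` are partial isometries from the code
onto mutually orthogonal syndrome spaces, with total projection `S = ∑ W_k W_kᴴ`. The channel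
with Kraus operators `W_kᴴ` and `1 - S` sends `F_k ρ F_lᴴ` to `δ_kl s_k² ρ` on code states, so
it returns `(∑ s_k²) ρ`, and trace preservation forces `(∑ s_k²) P = P`.
-/

open Matrix ComplexOrder

variable {n : Type*} [Fintype n]

def KnillLaflamme {ι : Type*} (P : Matrix n n ℂ) (E : ι → Matrix n n ℂ)
    (Lam : Matrix ι ι ℂ) : Prop :=
  ∀ i j, P * (E i)ᴴ * E j * P = Lam i j • P

def krausMix {ι κ : Type*} [Fintype ι] (U : Matrix ι κ ℂ) (E : ι → Matrix n n ℂ)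
    (k : κ) : Matrix n n ℂ :=
  ∑ i, U i k • E i

lemma Matrix.sum_mul_star_eq_one_apply {ι κ : Type*} [Fintype κ] [DecidableEq ι]
    {U : Matrix ι κ ℂ} (hU : U * Uᴴ = 1) (i j : ι) :
    ∑ k, U i k * star (U j k) = (1 : Matrix ι ι ℂ) i j := by
  rw [← hU, mul_apply]
  rfl

section krausMix

variable {ι κ : Type*} [Fintype ι] {E : ι → Matrix n n ℂ}

lemma sum_krausMix_mul_mul_conjTranspose [Fintype κ] [DecidableEq ι] {U : Matrix ι κ ℂ}
    (hU : U * Uᴴ = 1) (X : Matrix n n ℂ) :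
    ∑ k, krausMix U E k * X * (krausMix U E k)ᴴ = ∑ i, E i * X * (E i)ᴴ := by
  simp only [krausMix, conjTranspose_sum, conjTranspose_smul, Finset.sum_mul, Finset.mul_sum,
    smul_mul_assoc, mul_smul_comm, Finset.smul_sum, smul_smul]
  rw [Finset.sum_comm]
  refine Finset.sum_congr rfl fun j _ => ?_
  rw [Finset.sum_comm]
  simp only [← Finset.sum_smul, mul_comm (star _), sum_mul_star_eq_one_apply hU, one_apply,
    ite_smul, one_smul, zero_smul, Finset.sum_ite_eq', Finset.mem_univ, if_true]

lemma sum_conjTranspose_krausMix_mul_self [Fintype κ] [DecidableEq ι] {U : Matrix ι κ ℂ}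
    (hU : U * Uᴴ = 1) :
    ∑ k, (krausMix U E k)ᴴ * krausMix U E k = ∑ i, (E i)ᴴ * E i := by
  simp only [krausMix, conjTranspose_sum, conjTranspose_smul, Finset.sum_mul, Finset.mul_sum,
    smul_mul_assoc, mul_smul_comm, Finset.smul_sum, smul_smul]
  rw [Finset.sum_comm]
  refine Finset.sum_congr rfl fun i _ => ?_
  rw [Finset.sum_comm]
  simp only [← Finset.sum_smul, sum_mul_star_eq_one_apply hU, one_apply,
    ite_smul, one_smul, zero_smul, Finset.sum_ite_eq, Finset.mem_univ, if_true]

lemma knillLaflamme_krausMix {P : Matrix n n ℂ} {Lam : Matrix ι ι ℂ}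
    (hKL : KnillLaflamme P E Lam) (U : Matrix ι κ ℂ) :
    KnillLaflamme P (krausMix U E) (Uᴴ * Lam * U) := by
  intro k l
  simp only [krausMix, conjTranspose_sum, conjTranspose_smul, Finset.sum_mul, Finset.mul_sum,
    smul_mul_assoc, mul_smul_comm, Finset.smul_sum, smul_smul, hKL _ _, ← Finset.sum_smul]
  congr 1
  simp only [mul_apply, conjTranspose_apply, Finset.sum_mul]
  exact Finset.sum_congr rfl fun j _ => Finset.sum_congr rfl fun i _ => by ring

end krausMix

lemma Matrix.PosSemidef.exists_unitary_conj_eq_diagonal_sq {κ : Type*} [Fintype κ]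
    [DecidableEq κ] {Lam : Matrix κ κ ℂ} (hLam : Lam.PosSemidef) :
    ∃ (U : Matrix κ κ ℂ) (s : κ → ℝ), U * Uᴴ = 1 ∧
      Uᴴ * Lam * U = diagonal fun k => (s k : ℂ) ^ 2 := by
  refine ⟨hLam.1.eigenvectorUnitary, fun k => √(hLam.1.eigenvalues k), ?_, ?_⟩
  · simpa [star_eq_conjTranspose] using
      mem_unitaryGroup_iff.mp hLam.1.eigenvectorUnitary.2
  · have := hLam.1.conjStarAlgAut_star_eigenvectorUnitary
    simp only [Unitary.conjStarAlgAut_star_apply, star_eq_conjTranspose] at this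
    rw [this]
    congr 1
    funext k
    simp [← Complex.ofReal_pow, Real.sq_sqrt (hLam.eigenvalues_nonneg k)]

lemma sum_snoc_conjTranspose_mul_self [DecidableEq n] {r : ℕ} (V : Fin r → Matrix n n ℂ)
    {S : Matrix n n ℂ} (hS : ∑ k, (V k)ᴴ * V k = S) (hSS : S * S = S) :
    ∑ j, (Fin.snoc (α := fun _ => Matrix n n ℂ) V (1 - S) j)ᴴ *
      Fin.snoc (α := fun _ => Matrix n n ℂ) V (1 - S) j = 1 := by
  have hSH : Sᴴ = S := by simp [← hS, conjTranspose_sum]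
  rw [Fin.sum_univ_castSucc]
  simp only [Fin.snoc_castSucc, Fin.snoc_last, hS, conjTranspose_sub, conjTranspose_one, hSH,
    sub_mul, mul_sub, one_mul, mul_one, hSS]
  abel

lemma mul_sum_mul_conjTranspose {κ : Type*} [Fintype κ] (A : Matrix n n ℂ)
    (G : κ → Matrix n n ℂ) (ρ : Matrix n n ℂ) :
    A * (∑ k, G k * ρ * (G k)ᴴ) * Aᴴ = ∑ k, (A * G k) * ρ * (A * G k)ᴴ := by
  simp only [Finset.mul_sum, Finset.sum_mul, conjTranspose_mul, mul_assoc]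

lemma conjTranspose_mul_proj_mul_mul_proj {P : Matrix n n ℂ} (hP₁ : Pᴴ = P)
    (A B : Matrix n n ℂ) :
    (A * P)ᴴ * (B * P) = P * Aᴴ * B * P := by
  rw [conjTranspose_mul, hP₁]
  simp only [mul_assoc]

section codeIsometry

variable {κ : Type*} [DecidableEq κ] {P : Matrix n n ℂ} {F : κ → Matrix n n ℂ}
  {s : κ → ℝ}

/-- For `s k = 0` this is `0` (as `0⁻¹ = 0`), which is harmless since then `F k * P = 0`. -/
noncomputable def codeIsometry (P : Matrix n n ℂ) (F : κ → Matrix n n ℂ) (s : κ → ℝ)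
    (k : κ) : Matrix n n ℂ :=
  (s k : ℂ)⁻¹ • (F k * P)

noncomputable def syndromeProj [Fintype κ] (P : Matrix n n ℂ) (F : κ → Matrix n n ℂ)
    (s : κ → ℝ) : Matrix n n ℂ :=
  ∑ k, codeIsometry P F s k * (codeIsometry P F s k)ᴴ

variable (hP₁ : Pᴴ = P) (hKL : KnillLaflamme P F (diagonal fun k => (s k : ℂ) ^ 2))
include hP₁ hKL

lemma conjTranspose_codeIsometry_mul (m k : κ) :
    (codeIsometry P F s m)ᴴ * (F k * P) = if m = k then (s k : ℂ) • P else 0 := by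
  rw [codeIsometry, conjTranspose_smul, smul_mul_assoc, conjTranspose_mul_proj_mul_mul_proj hP₁,
    hKL, diagonal_apply, star_inv₀, Complex.star_def, Complex.conj_ofReal]
  split_ifs with hmk
  · subst hmk
    rw [smul_smul, sq, ← mul_assoc, inv_mul_mul_self]
  · simp

lemma smul_codeIsometry (k : κ) : (s k : ℂ) • codeIsometry P F s k = F k * P := by
  by_cases hs : (s k : ℂ) = 0
  · have hzero : (F k * P)ᴴ * (F k * P) = 0 := by
      rw [conjTranspose_mul_proj_mul_mul_proj hP₁, hKL, diagonal_apply_eq, hs]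
      simp
    rw [hs, zero_smul, eq_comm, ← conjTranspose_mul_self_eq_zero, hzero]
  · rw [codeIsometry, smul_smul, mul_inv_cancel₀ hs, one_smul]

lemma conjTranspose_codeIsometry_mul_codeIsometry (m k : κ) :
    (codeIsometry P F s m)ᴴ * codeIsometry P F s k
      = if m = k then ((s k : ℂ)⁻¹ * s k) • P else 0 := by
  rw [show codeIsometry P F s k = (s k : ℂ)⁻¹ • (F k * P) from rfl, mul_smul_comm,
    conjTranspose_codeIsometry_mul hP₁ hKL]
  split_ifs <;> simp only [smul_smul, smul_zero]

variable (hP₂ : P * P = P)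
include hP₂

lemma syndromeProj_mul_codeIsometry [Fintype κ] (k : κ) :
    syndromeProj P F s * codeIsometry P F s k = codeIsometry P F s k := by
  have hWP : codeIsometry P F s k * P = codeIsometry P F s k := by
    rw [codeIsometry, smul_mul_assoc, mul_assoc, hP₂]
  simp only [syndromeProj, Finset.sum_mul, mul_assoc,
    conjTranspose_codeIsometry_mul_codeIsometry hP₁ hKL, mul_ite, mul_zero, Finset.sum_ite_eq',
    Finset.mem_univ, if_true, mul_smul_comm, hWP]
  rw [codeIsometry, smul_smul]
  congr 1
  simpa using mul_inv_mul_cancel (s k : ℂ)⁻¹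

lemma syndromeProj_mul_self [Fintype κ] :
    syndromeProj P F s * syndromeProj P F s = syndromeProj P F s := by
  nth_rewrite 2 [syndromeProj]
  simp only [Finset.mul_sum, ← mul_assoc, syndromeProj_mul_codeIsometry hP₁ hKL hP₂]
  rfl

lemma one_sub_syndromeProj_mul [Fintype κ] [DecidableEq n] (k : κ) :
    (1 - syndromeProj P F s) * (F k * P) = 0 := by
  rw [← smul_codeIsometry hP₁ hKL, mul_smul_comm, sub_mul, one_mul,
    syndromeProj_mul_codeIsometry hP₁ hKL hP₂, sub_self, smul_zero]

end codeIsometry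

theorem exists_recovery_of_knillLaflamme_diagonal [DecidableEq n] {r : ℕ} {P : Matrix n n ℂ}
    (hP₁ : Pᴴ = P) (hP₂ : P * P = P) {F : Fin r → Matrix n n ℂ}
    (hF : ∑ k, (F k)ᴴ * F k = 1) {s : Fin r → ℝ}
    (hKL : KnillLaflamme P F (diagonal fun k => (s k : ℂ) ^ 2)) :
    ∃ R : Fin (r + 1) → Matrix n n ℂ, ∑ j, (R j)ᴴ * R j = 1 ∧
      ∀ ρ, ρ = P * ρ * P → ∑ j, R j * (∑ k, F k * ρ * (F k)ᴴ) * (R j)ᴴ = ρ := by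
  set W := codeIsometry P F s
  set S := syndromeProj P F s
  refine ⟨Fin.snoc (fun k => (W k)ᴴ) (1 - S), sum_snoc_conjTranspose_mul_self _
    (by simp only [conjTranspose_conjTranspose]; rfl) (syndromeProj_mul_self hP₁ hKL hP₂),
    fun ρ hρ => ?_⟩
  have hcode : ∑ k, F k * ρ * (F k)ᴴ = ∑ k, (F k * P) * ρ * (F k * P)ᴴ := by
    refine Finset.sum_congr rfl fun k _ => ?_
    rw [conjTranspose_mul, hP₁]
    conv_lhs => rw [hρ]
    simp only [mul_assoc]
  have hrecover :
      ∀ m, (W m)ᴴ * (∑ k, F k * ρ * (F k)ᴴ) * ((W m)ᴴ)ᴴ = (s m : ℂ) ^ 2 • ρ := by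
    intro m
    rw [hcode, mul_sum_mul_conjTranspose, Finset.sum_eq_single m]
    · rw [conjTranspose_codeIsometry_mul hP₁ hKL, if_pos rfl, conjTranspose_smul, hP₁,
        Complex.star_def, Complex.conj_ofReal]
      simp only [smul_mul_assoc, mul_smul_comm, smul_smul, ← sq, ← hρ]
    · intro k _ hkm
      rw [conjTranspose_codeIsometry_mul hP₁ hKL, if_neg (Ne.symm hkm)]
      simp
    · simp
  have hdiscard : (1 - S) * (∑ k, F k * ρ * (F k)ᴴ) * (1 - S)ᴴ = 0 := by
    rw [hcode, mul_sum_mul_conjTranspose]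
    simp [S, one_sub_syndromeProj_mul hP₁ hKL hP₂]
  have hscalar : (∑ k, (s k : ℂ) ^ 2) • P = P := by
    calc (∑ k, (s k : ℂ) ^ 2) • P = ∑ k, P * (F k)ᴴ * F k * P := by
          simp [hKL _ _, Finset.sum_smul]
      _ = P * (∑ k, (F k)ᴴ * F k) * P := by
          simp only [Finset.mul_sum, Finset.sum_mul, mul_assoc]
      _ = P := by rw [hF, mul_one, hP₂]
  rw [Fin.sum_univ_castSucc]
  simp only [Fin.snoc_castSucc, Fin.snoc_last, hrecover, hdiscard, add_zero, ← Finset.sum_smul]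
  calc (∑ k, (s k : ℂ) ^ 2) • ρ = ((∑ k, (s k : ℂ) ^ 2) • P) * ρ * P := by
        rw [smul_mul_assoc, smul_mul_assoc, ← hρ]
    _ = ρ := by rw [hscalar, ← hρ]

/-- If the Kraus operators `E_i` of a channel satisfy the Knill–Laflamme conditions
`P E_i† E_j P = Λ_ij P` for a (positive) scalar matrix `Λ`, then there is a recovery
channel `R` correcting the code with projection `P`. -/
theorem correctable_of_knill_laflamme (N r : ℕ)
    (P : Matrix (Fin N) (Fin N) ℂ) (hP₁ : Pᴴ = P) (hP₂ : P * P = P)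
    (E : Fin r → Matrix (Fin N) (Fin N) ℂ)
    (hE : ∑ i, (E i)ᴴ * E i = 1)
    (Lam : Matrix (Fin r) (Fin r) ℂ) (hLam : Lam.PosSemidef)
    (hKL : ∀ i j, P * (E i)ᴴ * E j * P = Lam i j • P) :
    ∃ (s : ℕ) (R : Fin s → Matrix (Fin N) (Fin N) ℂ),
      ∑ j, (R j)ᴴ * R j = 1 ∧
        ∀ ρ : Matrix (Fin N) (Fin N) ℂ, ρ = P * ρ * P →
          ∑ j, R j * (∑ i, E i * ρ * (E i)ᴴ) * (R j)ᴴ = ρ := by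
  obtain ⟨U, s, hU, hdiag⟩ := hLam.exists_unitary_conj_eq_diagonal_sq
  have hKLdiag : KnillLaflamme P (krausMix U E) (diagonal fun k => (s k : ℂ) ^ 2) :=
    hdiag ▸ knillLaflamme_krausMix hKL U
  obtain ⟨R, hR, hrecover⟩ := exists_recovery_of_knillLaflamme_diagonal hP₁ hP₂
    ((sum_conjTranspose_krausMix_mul_self hU).trans hE) hKLdiag
  refine ⟨r + 1, R, hR, fun ρ hρ => ?_⟩
  rw [← sum_krausMix_mul_mul_conjTranspose hU]
  exact hrecover ρ hρ
end

section
/- For a unital quantum channel E with Kraus operators {E_i}, the fixed point set Fix(E) = {ρ : E(ρ) = ρ} equals the commutant of the set {E_i, E_i†}. -/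
open Matrix

lemma sum_trace_conjTranspose_mul_self_eq_zero {N r : ℕ}
    (A : Fin r → Matrix (Fin N) (Fin N) ℂ)
    (h : ∑ i, ((A i)ᴴ * A i).trace = 0) : ∀ i, A i = 0 := by
  have key : ∀ i, ((A i)ᴴ * A i).trace
      = ((∑ j, ∑ k, Complex.normSq (A i k j) : ℝ) : ℂ) := by
    intro i
    simp only [Matrix.trace, Matrix.diag, Matrix.mul_apply,
      Matrix.conjTranspose_apply]
    push_cast
    exact Finset.sum_congr rfl fun j _ => Finset.sum_congr rfl fun k _ => by
      rw [Complex.normSq_eq_conj_mul_self]; rfl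
  rw [Finset.sum_congr rfl (fun i _ => key i), ← Complex.ofReal_sum,
    Complex.ofReal_eq_zero] at h
  have hnn : ∀ i ∈ Finset.univ, (0:ℝ) ≤ ∑ j, ∑ k, Complex.normSq (A i k j) :=
    fun i _ => Finset.sum_nonneg fun j _ => Finset.sum_nonneg fun k _ => Complex.normSq_nonneg _
  intro i
  ext k j
  have h1 := (Finset.sum_eq_zero_iff_of_nonneg hnn).mp h i (Finset.mem_univ i)
  have h2 := (Finset.sum_eq_zero_iff_of_nonneg
    (fun j _ => Finset.sum_nonneg fun k _ => Complex.normSq_nonneg _)).mp h1 j (Finset.mem_univ j)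
  have h3 := (Finset.sum_eq_zero_iff_of_nonneg
    (fun k _ => Complex.normSq_nonneg _)).mp h2 k (Finset.mem_univ k)
  simpa using Complex.normSq_eq_zero.mp h3

lemma comm_of_fix {N r : ℕ} (E : Fin r → Matrix (Fin N) (Fin N) ℂ)
    (htp : ∑ i, (E i)ᴴ * E i = 1)
    (hunital : ∑ i, E i * (E i)ᴴ = 1)
    (ρ : Matrix (Fin N) (Fin N) ℂ)
    (hfix : ∑ i, E i * ρ * (E i)ᴴ = ρ)
    (hfixH : ∑ i, E i * ρᴴ * (E i)ᴴ = ρᴴ) :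
    ∀ i, E i * ρ = ρ * E i := by
  set C : Fin r → Matrix (Fin N) (Fin N) ℂ := fun i => E i * ρ - ρ * E i with hC
  have hm : ∀ i, (C i)ᴴ * C i
      = ρᴴ*(E i)ᴴ*(E i)*ρ - ρᴴ*(E i)ᴴ*ρ*(E i)
        - (E i)ᴴ*(ρᴴ*(E i*ρ)) + (E i)ᴴ*(ρᴴ*ρ*(E i)) := by
    intro i
    simp only [hC, conjTranspose_sub, conjTranspose_mul]
    noncomm_ring
  have t1 : ∀ i, (ρᴴ*(E i)ᴴ*(E i)*ρ).trace = ((ρ*ρᴴ)*((E i)ᴴ*E i)).trace := by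
    intro i; rw [trace_mul_comm]; congr 1; noncomm_ring
  have t2 : ∀ i, (ρᴴ*(E i)ᴴ*ρ*(E i)).trace = ((E i*ρᴴ*(E i)ᴴ)*ρ).trace := by
    intro i; rw [trace_mul_comm]; congr 1; noncomm_ring
  have t3 : ∀ i, ((E i)ᴴ*(ρᴴ*(E i*ρ))).trace = (ρᴴ*(E i*ρ*(E i)ᴴ)).trace := by
    intro i; rw [trace_mul_comm]; congr 1; noncomm_ring
  have t4 : ∀ i, ((E i)ᴴ*(ρᴴ*ρ*(E i))).trace = ((ρᴴ*ρ)*(E i*(E i)ᴴ)).trace := by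
    intro i; rw [trace_mul_comm]; congr 1; noncomm_ring
  have hzero : ∑ i, ((C i)ᴴ * C i).trace = 0 := by
    calc ∑ i, ((C i)ᴴ * C i).trace
        = ∑ i, (((ρ*ρᴴ)*((E i)ᴴ*E i)).trace - ((E i*ρᴴ*(E i)ᴴ)*ρ).trace
            - (ρᴴ*(E i*ρ*(E i)ᴴ)).trace + ((ρᴴ*ρ)*(E i*(E i)ᴴ)).trace) := by
          refine Finset.sum_congr rfl fun i _ => ?_
          rw [hm i, trace_add, trace_sub, trace_sub, t1 i, t2 i, t3 i, t4 i]
      _ = ((ρ*ρᴴ)*(∑ i, (E i)ᴴ*E i)).trace - ((∑ i, E i*ρᴴ*(E i)ᴴ)*ρ).trace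
            - (ρᴴ*(∑ i, E i*ρ*(E i)ᴴ)).trace + ((ρᴴ*ρ)*(∑ i, E i*(E i)ᴴ)).trace := by
          simp [Finset.sum_add_distrib, Finset.sum_sub_distrib,
            Matrix.mul_sum, Matrix.sum_mul, trace_sum]
      _ = 0 := by
          rw [htp, hunital, hfix, hfixH, mul_one, mul_one, trace_mul_comm ρ ρᴴ]
          ring
  intro i
  have := sum_trace_conjTranspose_mul_self_eq_zero C hzero i
  rw [hC] at this
  exact sub_eq_zero.mp this

/-- For a unital quantum channel, the fixed point set equals the commutant of the
Kraus operators and their adjoints. -/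
theorem fix_eq_noise_commutant (N r : ℕ)
    (E : Fin r → Matrix (Fin N) (Fin N) ℂ)
    (htp : ∑ i, (E i)ᴴ * E i = 1)
    (hunital : ∑ i, E i * (E i)ᴴ = 1) :
    ∀ ρ : Matrix (Fin N) (Fin N) ℂ,
      (∑ i, E i * ρ * (E i)ᴴ = ρ) ↔
        (∀ i, ρ * E i = E i * ρ ∧ ρ * (E i)ᴴ = (E i)ᴴ * ρ) := by
  intro ρ
  constructor
  · intro hfix
    have hfixH : ∑ i, E i * ρᴴ * (E i)ᴴ = ρᴴ := by
      have := congrArg conjTranspose hfix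
      simpa [conjTranspose_sum, conjTranspose_mul, mul_assoc] using this
    intro i
    refine ⟨(comm_of_fix E htp hunital ρ hfix hfixH i).symm, ?_⟩
    have h2 := comm_of_fix E htp hunital ρᴴ hfixH (by simpa using hfix) i
    have := congrArg conjTranspose h2
    simpa [conjTranspose_mul] using this
  · intro hcomm
    calc ∑ i, E i * ρ * (E i)ᴴ = ∑ i, ρ * (E i * (E i)ᴴ) := by
          refine Finset.sum_congr rfl fun i _ => ?_
          rw [← (hcomm i).1, mul_assoc]
      _ = ρ := by rw [← Matrix.mul_sum, hunital, mul_one]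
end

section
/- In Deutsch's algorithm: for f : ℤ₂ → ℤ₂, applying (H⊗1)∘U_f∘(H⊗H) to the state |0⟩⊗|1⟩ yields ±|0⟩⊗|−⟩ if f is constant and ±|1⟩⊗|−⟩ if f is balanced, where |−⟩ = (|0⟩−|1⟩)/√2. -/
open Matrix Kronecker

/-- The Hadamard gate on `ℂ²`. -/
noncomputable def Hgate : Matrix (Fin 2) (Fin 2) ℂ :=
  ((Real.sqrt 2 : ℂ))⁻¹ • !![1, 1; 1, -1]

/-- The oracle unitary `U_f |x⟩⊗|y⟩ = |x⟩⊗|y ⊕ f(x)⟩` on `ℂ²⊗ℂ²`. -/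
def Uf (f : Fin 2 → Fin 2) : Matrix (Fin 2 × Fin 2) (Fin 2 × Fin 2) ℂ :=
  Matrix.of fun a b => if a = (b.1, b.2 + f b.1) then 1 else 0

/-- The tensor product of two qubit state vectors. -/
def vecTensor (a b : Fin 2 → ℂ) : Fin 2 × Fin 2 → ℂ := fun p => a p.1 * b p.2

/-- The computational basis states. -/
def ket0 : Fin 2 → ℂ := fun i => if i = 0 then 1 else 0
def ket1 : Fin 2 → ℂ := fun i => if i = 1 then 1 else 0

/-- The state `|−⟩ = (|0⟩ − |1⟩)/√2`. -/
noncomputable def ketMinus : Fin 2 → ℂ :=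
  fun i => if i = 0 then ((Real.sqrt 2 : ℂ))⁻¹ else -((Real.sqrt 2 : ℂ))⁻¹

set_option maxHeartbeats 1600000 in
/-- Deutsch's algorithm: applying `(H⊗1) ∘ U_f ∘ (H⊗H)` to `|0⟩⊗|1⟩` yields
`±|0⟩⊗|−⟩` if `f` is constant and `±|1⟩⊗|−⟩` if `f` is balanced. -/
theorem deutsch_algorithm (f : Fin 2 → Fin 2) :
    let final := (Hgate ⊗ₖ (1 : Matrix (Fin 2) (Fin 2) ℂ)).mulVec
      ((Uf f).mulVec ((Hgate ⊗ₖ Hgate).mulVec (vecTensor ket0 ket1)))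
    (f 0 = f 1 →
        ∃ s : ℂ, (s = 1 ∨ s = -1) ∧ final = s • vecTensor ket0 ketMinus) ∧
      (f 0 ≠ f 1 →
        ∃ s : ℂ, (s = 1 ∨ s = -1) ∧ final = s • vecTensor ket1 ketMinus) := by
  intro final
  have e2 : ((Real.sqrt 2 : ℂ))⁻¹ * ((Real.sqrt 2 : ℂ))⁻¹ = 2⁻¹ := by
    rw [← mul_inv, ← Complex.ofReal_mul, Real.mul_self_sqrt (by norm_num)]
    norm_num
  have e3 : ((Real.sqrt 2 : ℂ))⁻¹ ^ 3 * 2 = ((Real.sqrt 2 : ℂ))⁻¹ := by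
    have h : ((Real.sqrt 2 : ℂ))⁻¹ ^ 3 * 2
        = ((Real.sqrt 2 : ℂ))⁻¹ * ((Real.sqrt 2 : ℂ))⁻¹ * (((Real.sqrt 2 : ℂ))⁻¹ * 2) := by ring
    rw [h, e2]; ring
  have h0 : f 0 = 0 ∨ f 0 = 1 := by omega
  have h1 : f 1 = 0 ∨ f 1 = 1 := by omega
  constructor <;> intro h <;>
    [ (rcases h0 with h0 | h0 <;> have h1 : f 1 = f 0 := h.symm);
      (rcases h0 with h0 | h0 <;> rcases h1 with h1 | h1 <;> first | (exact absurd (h0.trans h1.symm) h) | skip) ]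
  · exact ⟨1, Or.inl rfl, by
      funext p; fin_cases p <;>
        simp [final, Hgate, Uf, vecTensor, ket0, ket1, ketMinus, Matrix.mulVec, dotProduct,
          Fintype.sum_prod_type, Fin.sum_univ_two, Matrix.one_apply, Matrix.mul_apply, Matrix.kroneckerMap_apply, h0, h1, Prod.ext_iff] <;>
        ring_nf <;> try simp only [e3]
⟩
  · exact ⟨-1, Or.inr rfl, by
      funext p; fin_cases p <;>
        simp [final, Hgate, Uf, vecTensor, ket0, ket1, ketMinus, Matrix.mulVec, dotProduct,
          Fintype.sum_prod_type, Fin.sum_univ_two, Matrix.one_apply, Matrix.mul_apply, Matrix.kroneckerMap_apply, h0, h1, Prod.ext_iff] <;>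
        ring_nf <;> try simp only [e3]
⟩
  · exact ⟨1, Or.inl rfl, by
      funext p; fin_cases p <;>
        simp [final, Hgate, Uf, vecTensor, ket0, ket1, ketMinus, Matrix.mulVec, dotProduct,
          Fintype.sum_prod_type, Fin.sum_univ_two, Matrix.one_apply, Matrix.mul_apply, Matrix.kroneckerMap_apply, h0, h1, Prod.ext_iff] <;>
        ring_nf <;> try simp only [e3]
⟩
  · exact ⟨-1, Or.inr rfl, by
      funext p; fin_cases p <;>
        simp [final, Hgate, Uf, vecTensor, ket0, ket1, ketMinus, Matrix.mulVec, dotProduct,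
          Fintype.sum_prod_type, Fin.sum_univ_two, Matrix.one_apply, Matrix.mul_apply, Matrix.kroneckerMap_apply, h0, h1, Prod.ext_iff] <;>
        ring_nf <;> try simp only [e3]
⟩
end
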